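/- Let K ≥ 1, N ≥ 1 and let h_{k,i} ∈ ℝ^p for k = 1,…,K and i = 1,…,N be feature vectors. Define the mean-squared-error linear probing loss L(W,b) = (1/(2KN))·∑_{k=1}^K ∑_{i=1}^N ‖W h_{k,i} + b − e_k‖² over W ∈ ℝ^{K×p} and b ∈ ℝ^K, where e_k is the k-th standard basis vector of ℝ^K. Then the infimum of L over all (W,b) is attained and equals −(1/(2K))·Tr[Σ_T† Σ_B] + 1/2 − 1/(2K). -/

import Mathlib

/-!
The loss splits over the rows `j` of `(W, b)`, and row `j` is a least-squares regression of the
one-hot targets `δ_{jk}` on the features. Centering the features at `μ_G` separates the intercept,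
which contributes `KN (b_j + w_j ⬝ μ_G - 1/K)²`, from the weights. The normal equations for `w_j`
read `Σ_T w_j = (μ_j - μ_G) / K`, and `w_j = Σ_T† (μ_j - μ_G) / K` solves them because
`Σ_T Σ_T†` projects onto `(ker Σ_T)ᗮ`, which contains every `h_{k,i} - μ_G`. The residuals
`N (1 - 1/K) - (N/K) (μ_j - μ_G) ⬝ Σ_T† (μ_j - μ_G)` then sum to `N (K - 1) - N Tr[Σ_T† Σ_B]`.
-/

open Matrix Finset

noncomputable section

/-- The `k`-th class mean `μ_k = (1/N) ∑_i h_{k,i}`. -/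
def classMean {K N p : ℕ} (H : Fin K → Fin N → (Fin p → ℝ)) (k : Fin K) : Fin p → ℝ :=
  (N : ℝ)⁻¹ • ∑ i, H k i

/-- The global mean `μ_G = (1/(KN)) ∑_{k,i} h_{k,i}`. -/
def globalMean {K N p : ℕ} (H : Fin K → Fin N → (Fin p → ℝ)) : Fin p → ℝ :=
  ((K : ℝ) * (N : ℝ))⁻¹ • ∑ k, ∑ i, H k i

/-- Within-class covariance `Σ_W = (1/(KN)) ∑_{k,i} (h_{k,i} − μ_k)(h_{k,i} − μ_k)ᵀ`. -/
def SigmaW {K N p : ℕ} (H : Fin K → Fin N → (Fin p → ℝ)) : Matrix (Fin p) (Fin p) ℝ :=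
  ((K : ℝ) * (N : ℝ))⁻¹ •
    ∑ k, ∑ i, vecMulVec (H k i - classMean H k) (H k i - classMean H k)

/-- Between-class covariance `Σ_B = (1/K) ∑_k (μ_k − μ_G)(μ_k − μ_G)ᵀ`. -/
def SigmaB {K N p : ℕ} (H : Fin K → Fin N → (Fin p → ℝ)) : Matrix (Fin p) (Fin p) ℝ :=
  (K : ℝ)⁻¹ • ∑ k, vecMulVec (classMean H k - globalMean H) (classMean H k - globalMean H)

/-- Overall covariance `Σ_T = (1/(KN)) ∑_{k,i} (h_{k,i} − μ_G)(h_{k,i} − μ_G)ᵀ`. -/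
def SigmaT {K N p : ℕ} (H : Fin K → Fin N → (Fin p → ℝ)) : Matrix (Fin p) (Fin p) ℝ :=
  ((K : ℝ) * (N : ℝ))⁻¹ •
    ∑ k, ∑ i, vecMulVec (H k i - globalMean H) (H k i - globalMean H)
/-- `Ad` is the Moore–Penrose pseudoinverse of `A`: the four Penrose conditions. -/
def IsMoorePenrose {p : ℕ} (A Ad : Matrix (Fin p) (Fin p) ℝ) : Prop :=
  A * Ad * A = A ∧ Ad * A * Ad = Ad ∧ (A * Ad)ᵀ = A * Ad ∧ (Ad * A)ᵀ = Ad * A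

/-- MSE linear probing loss `L(W,b) = (1/(2KN)) ∑_{k,i} ‖W h_{k,i} + b − e_k‖²`. -/
def mseLoss {K N p : ℕ} (H : Fin K → Fin N → (Fin p → ℝ))
    (W : Matrix (Fin K) (Fin p) ℝ) (b : Fin K → ℝ) : ℝ :=
  (2 * (K : ℝ) * (N : ℝ))⁻¹ *
    ∑ k, ∑ i, ∑ j, ((W.mulVec (H k i) + b - Pi.single k 1 : Fin K → ℝ) j) ^ 2

section LeastSquares

variable {ι m n R : Type*} [Fintype ι] [Fintype m] [Fintype n] [CommRing R]

lemma sum_vecMulVec_self_mulVec (x : ι → n → R) (v : n → R) :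
    (∑ q, vecMulVec (x q) (x q)) *ᵥ v = ∑ q, (x q ⬝ᵥ v) • x q := by
  simp only [sum_mulVec, vecMulVec_mulVec, op_smul_eq_smul]

lemma dotProduct_eq_zero_of_sum_vecMulVec_self_mulVec_eq_zero [LinearOrder R]
    [IsStrictOrderedRing R] {x : ι → n → R} {v : n → R}
    (hv : (∑ q, vecMulVec (x q) (x q)) *ᵥ v = 0) (q : ι) : x q ⬝ᵥ v = 0 := by
  have hsq : ∑ q, (x q ⬝ᵥ v) ^ 2 = 0 := by
    have := congrArg (· ⬝ᵥ v) hv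
    simp only [sum_vecMulVec_self_mulVec, sum_dotProduct, smul_dotProduct, smul_eq_mul,
      zero_dotProduct] at this
    simpa only [sq] using this
  exact pow_eq_zero_iff two_ne_zero |>.mp <|
    (sum_eq_zero_iff_of_nonneg fun q _ => sq_nonneg _).mp hsq q (mem_univ q)

lemma mul_mulVec_eq_self_of_forall_dotProduct_eq_zero [LinearOrder R] [IsStrictOrderedRing R]
    {A : Matrix m n R} {B : Matrix n m R} (hABA : A * B * A = A) (hAB : (A * B)ᵀ = A * B)
    {v : m → R} (hv : ∀ w, Aᵀ *ᵥ w = 0 → v ⬝ᵥ w = 0) : (A * B) *ᵥ v = v := by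
  set w := v - (A * B) *ᵥ v
  have hAtAB : Aᵀ * (A * B) = Aᵀ := by
    rw [← hAB, ← transpose_mul, hABA]
  have hABw : (A * B) *ᵥ w = 0 := by
    rw [mulVec_sub, mulVec_mulVec, show A * B * (A * B) = A * B by rw [← Matrix.mul_assoc, hABA],
      sub_self]
  have hw : w ⬝ᵥ w = 0 := by
    have hker : Aᵀ *ᵥ w = 0 := by
      rw [mulVec_sub, mulVec_mulVec, hAtAB, sub_self]
    calc w ⬝ᵥ w = v ⬝ᵥ w - v ⬝ᵥ ((A * B)ᵀ *ᵥ w) := by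
          rw [dotProduct_mulVec, vecMul_transpose, ← sub_dotProduct]
      _ = 0 := by rw [hAB, hABw, dotProduct_zero, hv w hker, sub_zero]
  exact (sub_eq_zero.mp (dotProduct_self_eq_zero.mp hw)).symm

lemma sum_sq_sub_eq_of_normal_eq {x : ι → n → R} {t : ι → R} {u : n → R}
    (hu : (∑ q, vecMulVec (x q) (x q)) *ᵥ u = ∑ q, t q • x q) (w : n → R) :
    ∑ q, (w ⬝ᵥ x q - t q) ^ 2
      = ∑ q, ((w - u) ⬝ᵥ x q) ^ 2 + ∑ q, t q ^ 2 - u ⬝ᵥ ∑ q, t q • x q := by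
  have normal : ∀ z, ∑ q, (u ⬝ᵥ x q) * (z ⬝ᵥ x q) = ∑ q, t q * (z ⬝ᵥ x q) := by
    intro z
    have := congrArg (z ⬝ᵥ ·) hu
    simpa [sum_vecMulVec_self_mulVec, dotProduct_sum, dotProduct_smul, dotProduct_comm _ u]
      using this
  have split : ∀ q, (w ⬝ᵥ x q - t q) ^ 2 = ((w - u) ⬝ᵥ x q) ^ 2
      + 2 * ((u ⬝ᵥ x q) * ((w - u) ⬝ᵥ x q) - t q * ((w - u) ⬝ᵥ x q))
      + ((u ⬝ᵥ x q) * (u ⬝ᵥ x q) - t q * (u ⬝ᵥ x q)) + t q ^ 2 - t q * (u ⬝ᵥ x q) := by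
    intro q
    rw [sub_dotProduct]
    ring
  simp only [split, sum_add_distrib, sum_sub_distrib, ← mul_sum, normal, dotProduct_sum,
    dotProduct_smul, smul_eq_mul]
  ring

lemma sum_add_sq_of_sum_eq_zero {f : ι → R} (hf : ∑ q, f q = 0) (c : R) :
    ∑ q, (f q + c) ^ 2 = ∑ q, f q ^ 2 + Fintype.card ι * c ^ 2 := by
  simp only [add_sq, sum_add_distrib, ← sum_mul, ← mul_sum, hf, sum_const, card_univ,
    nsmul_eq_mul]
  ring

theorem sum_sq_affine_eq {x : ι → n → R} (hx : ∑ q, x q = 0) {t : ι → R} {τ : R}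
    (hτ : ∑ q, t q = Fintype.card ι * τ) {u : n → R}
    (hu : (∑ q, vecMulVec (x q) (x q)) *ᵥ u = ∑ q, t q • x q) (w : n → R) (β : R) :
    ∑ q, (w ⬝ᵥ x q + β - t q) ^ 2
      = ∑ q, ((w - u) ⬝ᵥ x q) ^ 2 + Fintype.card ι * (β - τ) ^ 2
        + ∑ q, (t q - τ) ^ 2 - u ⬝ᵥ ∑ q, t q • x q := by
  have hc : ∑ q, (t q - τ) • x q = ∑ q, t q • x q := by
    simp [sub_smul, sum_sub_distrib, ← smul_sum, hx]
  have hf : ∑ q, (w ⬝ᵥ x q - (t q - τ)) = 0 := by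
    rw [sum_sub_distrib, ← dotProduct_sum, hx, dotProduct_zero, sum_sub_distrib, hτ]
    simp
  calc ∑ q, (w ⬝ᵥ x q + β - t q) ^ 2 = ∑ q, ((w ⬝ᵥ x q - (t q - τ)) + (β - τ)) ^ 2 := by
        congr! 2; ring
    _ = _ := by
      rw [sum_add_sq_of_sum_eq_zero hf, sum_sq_sub_eq_of_normal_eq (hc ▸ hu) w, hc]
      ring

end LeastSquares

section LinearProbing

variable {K N p : ℕ} (H : Fin K → Fin N → (Fin p → ℝ))

def centeredFeature (q : Fin K × Fin N) : Fin p → ℝ :=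
  H q.1 q.2 - globalMean H

def optimalWeights (STd : Matrix (Fin p) (Fin p) ℝ) : Matrix (Fin K) (Fin p) ℝ :=
  fun j => (K : ℝ)⁻¹ • STd *ᵥ (classMean H j - globalMean H)

def optimalBias (STd : Matrix (Fin p) (Fin p) ℝ) : Fin K → ℝ :=
  fun j => (K : ℝ)⁻¹ - optimalWeights H STd j ⬝ᵥ globalMean H

lemma mseLoss_eq_sum_rows (W : Matrix (Fin K) (Fin p) ℝ) (b : Fin K → ℝ) :
    mseLoss H W b = (2 * (K : ℝ) * N)⁻¹ * ∑ j, ∑ q : Fin K × Fin N,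
      (W j ⬝ᵥ centeredFeature H q + (b j + W j ⬝ᵥ globalMean H)
        - (Pi.single q.1 1 : Fin K → ℝ) j) ^ 2 := by
  rw [mseLoss]
  congr 1
  conv_rhs => rw [sum_comm, Fintype.sum_prod_type]
  refine sum_congr rfl fun k _ => sum_congr rfl fun i _ => sum_congr rfl fun j _ => ?_
  simp only [centeredFeature, dotProduct_sub, Pi.add_apply, Pi.sub_apply]
  change (W j ⬝ᵥ H k i + b j - _) ^ 2 = _
  ring

variable {H}

lemma sum_centeredFeature (hK : 1 ≤ K) (hN : 1 ≤ N) : ∑ q, centeredFeature H q = 0 := by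
  have hKN : (K : ℝ) * N ≠ 0 := by positivity
  simp only [centeredFeature, sum_sub_distrib, sum_const, card_univ, Fintype.card_prod,
    Fintype.card_fin, Fintype.sum_prod_type, globalMean]
  rw [← Nat.cast_smul_eq_nsmul ℝ, smul_smul, Nat.cast_mul, mul_inv_cancel₀ hKN, one_smul, sub_self]

lemma sum_single_smul_centeredFeature (hN : 1 ≤ N) (j : Fin K) :
    ∑ q, (Pi.single q.1 1 : Fin K → ℝ) j • centeredFeature H q
      = (N : ℝ) • (classMean H j - globalMean H) := by
  have hN' : (N : ℝ) ≠ 0 := by positivity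
  simp only [Fintype.sum_prod_type_right, Pi.single_apply, ite_smul, one_smul, zero_smul,
    sum_ite_eq, mem_univ, if_true, centeredFeature, sum_sub_distrib, sum_const, card_univ,
    Fintype.card_fin, classMean, smul_sub, smul_smul, mul_inv_cancel₀ hN',
    ← Nat.cast_smul_eq_nsmul ℝ]

lemma SigmaT_eq_smul_sum :
    SigmaT H = ((K : ℝ) * N)⁻¹ • ∑ q, vecMulVec (centeredFeature H q) (centeredFeature H q) := by
  rw [SigmaT, Fintype.sum_prod_type]
  rfl

lemma trace_mul_SigmaB (M : Matrix (Fin p) (Fin p) ℝ) :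
    (M * SigmaB H).trace
      = (K : ℝ)⁻¹ *
        ∑ k, (M *ᵥ (classMean H k - globalMean H)) ⬝ᵥ (classMean H k - globalMean H) := by
  simp [SigmaB, Matrix.mul_sum, mul_vecMulVec, trace_sum]

lemma sum_single_apply (j : Fin K) :
    ∑ q : Fin K × Fin N, (Pi.single q.1 1 : Fin K → ℝ) j = N := by
  simp only [Fintype.sum_prod_type_right, Pi.single_apply, sum_ite_eq, mem_univ, if_true,
    sum_const, card_univ, Fintype.card_fin, nsmul_eq_mul, mul_one]

lemma sum_sq_single_apply_sub (j : Fin K) (c : ℝ) :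
    ∑ q : Fin K × Fin N, ((Pi.single q.1 1 : Fin K → ℝ) j - c) ^ 2
      = N * (1 - 2 * c + K * c ^ 2) := by
  have hδ : ∀ k : Fin K, ((Pi.single k 1 : Fin K → ℝ) j - c) ^ 2
      = c ^ 2 + (1 - 2 * c) * (Pi.single k 1 : Fin K → ℝ) j := by
    intro k
    rw [Pi.single_apply]
    split_ifs <;> ring
  simp only [hδ, sum_add_distrib, ← mul_sum, sum_single_apply, sum_const, card_univ,
    Fintype.card_prod, Fintype.card_fin, nsmul_eq_mul, Nat.cast_mul]
  ring

lemma SigmaT_mul_mulVec_classMean_sub (hK : 1 ≤ K) (hN : 1 ≤ N)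
    {STd : Matrix (Fin p) (Fin p) ℝ} (hSTd : IsMoorePenrose (SigmaT H) STd) (j : Fin K) :
    (SigmaT H * STd) *ᵥ (classMean H j - globalMean H) = classMean H j - globalMean H := by
  refine mul_mulVec_eq_self_of_forall_dotProduct_eq_zero hSTd.1 hSTd.2.2.1 fun w hw => ?_
  have hKN : ((K : ℝ) * N)⁻¹ ≠ 0 := by positivity
  have hN' : (N : ℝ) ≠ 0 := by positivity
  have hGw : (∑ q, vecMulVec (centeredFeature H q) (centeredFeature H q)) *ᵥ w = 0 := by
    rw [SigmaT_eq_smul_sum, transpose_smul, transpose_sum] at hw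
    simpa only [transpose_vecMulVec, smul_mulVec, smul_eq_zero, hKN, false_or] using hw
  rw [← inv_smul_smul₀ hN' (classMean H j - globalMean H), ← sum_single_smul_centeredFeature hN,
    smul_dotProduct, sum_dotProduct]
  simp [smul_dotProduct, dotProduct_eq_zero_of_sum_vecMulVec_self_mulVec_eq_zero hGw]

lemma sum_vecMulVec_centeredFeature_mulVec_optimalWeights (hK : 1 ≤ K) (hN : 1 ≤ N)
    {STd : Matrix (Fin p) (Fin p) ℝ} (hSTd : IsMoorePenrose (SigmaT H) STd) (j : Fin K) :
    (∑ q, vecMulVec (centeredFeature H q) (centeredFeature H q)) *ᵥ optimalWeights H STd j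
      = ∑ q, (Pi.single q.1 1 : Fin K → ℝ) j • centeredFeature H q := by
  have hK' : (K : ℝ) ≠ 0 := by positivity
  have hKN : (K : ℝ) * N ≠ 0 := by positivity
  rw [← smul_inv_smul₀ hKN (∑ q, _), ← SigmaT_eq_smul_sum, sum_single_smul_centeredFeature hN,
    optimalWeights, smul_mulVec, mulVec_smul, mulVec_mulVec,
    SigmaT_mul_mulVec_classMean_sub hK hN hSTd, smul_smul]
  congr 1
  field_simp

theorem mseLoss_eq_sum_sq_add (hK : 1 ≤ K) (hN : 1 ≤ N) {STd : Matrix (Fin p) (Fin p) ℝ}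
    (hSTd : IsMoorePenrose (SigmaT H) STd) (W : Matrix (Fin K) (Fin p) ℝ) (b : Fin K → ℝ) :
    mseLoss H W b = (2 * (K : ℝ) * N)⁻¹ * ∑ j,
        (∑ q, ((W j - optimalWeights H STd j) ⬝ᵥ centeredFeature H q) ^ 2
          + K * N * (b j + W j ⬝ᵥ globalMean H - (K : ℝ)⁻¹) ^ 2)
      + (-(2 * (K : ℝ))⁻¹ * (STd * SigmaB H).trace + 1 / 2 - (2 * (K : ℝ))⁻¹) := by
  have hK' : (K : ℝ) ≠ 0 := by positivity
  have hN' : (N : ℝ) ≠ 0 := by positivity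
  have hτ (j : Fin K) : ∑ q : Fin K × Fin N, (Pi.single q.1 1 : Fin K → ℝ) j
      = Fintype.card (Fin K × Fin N) * (K : ℝ)⁻¹ := by
    rw [sum_single_apply, Fintype.card_prod, Fintype.card_fin, Fintype.card_fin, Nat.cast_mul]
    field_simp
  simp only [mseLoss_eq_sum_rows, sum_sq_affine_eq (sum_centeredFeature hK hN) (hτ _)
    (sum_vecMulVec_centeredFeature_mulVec_optimalWeights hK hN hSTd _), sum_sq_single_apply_sub,
    sum_single_smul_centeredFeature hN, trace_mul_SigmaB, optimalWeights, smul_dotProduct,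
    dotProduct_smul, smul_eq_mul, Fintype.card_prod, Fintype.card_fin, Nat.cast_mul,
    sum_add_distrib, sum_sub_distrib, sum_const, card_univ, nsmul_eq_mul, ← mul_sum]
  field_simp
  ring

end LinearProbing

/-- **Theorem 1 (optimal MSE linear probing loss).** For `K ≥ 1`, `N ≥ 1` and features
`h_{k,i} ∈ ℝ^p`, the infimum of the MSE linear probing loss is attained, and equals
`−(1/(2K))·Tr[Σ_T† Σ_B] + 1/2 − 1/(2K)`. -/
theorem optimal_mse_linear_probing_loss {K N p : ℕ} (hK : 1 ≤ K) (hN : 1 ≤ N)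
    (H : Fin K → Fin N → (Fin p → ℝ))
    (STd : Matrix (Fin p) (Fin p) ℝ) (hSTd : IsMoorePenrose (SigmaT H) STd) :
    ∃ (W : Matrix (Fin K) (Fin p) ℝ) (b : Fin K → ℝ),
      (∀ (W' : Matrix (Fin K) (Fin p) ℝ) (b' : Fin K → ℝ), mseLoss H W b ≤ mseLoss H W' b') ∧
      mseLoss H W b = -(2 * (K : ℝ))⁻¹ * (STd * SigmaB H).trace + 1 / 2 - (2 * (K : ℝ))⁻¹ := by
  have hopt : mseLoss H (optimalWeights H STd) (optimalBias H STd)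
      = -(2 * (K : ℝ))⁻¹ * (STd * SigmaB H).trace + 1 / 2 - (2 * (K : ℝ))⁻¹ := by
    simp [mseLoss_eq_sum_sq_add hK hN hSTd, optimalBias]
  refine ⟨optimalWeights H STd, optimalBias H STd, fun W' b' => ?_, hopt⟩
  rw [hopt, mseLoss_eq_sum_sq_add hK hN hSTd W' b']
  exact le_add_of_nonneg_left (by positivity)
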